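/- arXiv:2501.05536 — 7 statements merged into one kernel-verified Lean document; each statement's English description precedes it below -/
import Mathlib

section
/- With S, G, η, X and X_G as above, if the projection π : X_G → X is surjective, then (X_G, shift action, π) is terminal among extensions: for any continuous G-action on a space Y and continuous surjective τ : Y → X with s·τ(y) = τ(η(s)·y) for all s ∈ S, there exists a unique continuous G-equivariant map φ : Y → X_G with π ∘ φ = τ, given by φ(y)_h = τ(h·y). -/
/-- The set `X_G` with the shift `G`-action and projection `π`. -/
def extSet {S G X : Type*} [Monoid S] [Group G] (η : S →* G) (α : S → X → X) :
    Set (G → X) :=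
  {x | ∀ (s : S) (h : G), α s (x h) = x (η s * h)}

/-- If `π : X_G → X` is surjective, then `(X_G, shift, π)` is terminal among
`G`-extensions of the `S`-action: any continuous `G`-action on `Y` with a continuous
surjection `τ : Y → X` satisfying `s·τ(y) = τ(η(s)·y)` factors uniquely through `X_G`
via a continuous `G`-equivariant map `φ`, which is given by `φ(y)_h = τ(h·y)`. -/
theorem stmt_10 (S : Type*) [Monoid S] (G : Type*) [Group G] (η : S →* G)
    (hinj : Function.Injective η)
    (X : Type*) [TopologicalSpace X]
    (α : S → X → X) (h1 : ∀ x, α 1 x = x)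
    (hmul : ∀ s t x, α (s * t) x = α s (α t x))
    (hcont : ∀ s, Continuous (α s))
    (hsurj : ∀ x0 : X, ∃ x ∈ extSet η α, x 1 = x0)
    (Y : Type*) [TopologicalSpace Y]
    (β : G → Y → Y) (hβ1 : ∀ y, β 1 y = y)
    (hβmul : ∀ g g' y, β (g * g') y = β g (β g' y))
    (hβcont : ∀ g, Continuous (β g))
    (τ : Y → X) (hτc : Continuous τ) (hτsurj : Function.Surjective τ)
    (hτeq : ∀ (s : S) (y : Y), α s (τ y) = τ (β (η s) y)) :
    (∃ φ : Y → G → X,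
      ((∀ y, φ y ∈ extSet η α) ∧ Continuous φ ∧
        (∀ g y, φ (β g y) = fun h => φ y (h * g)) ∧ (∀ y, φ y 1 = τ y)) ∧
      ∀ y h, φ y h = τ (β h y)) ∧
    ∀ φ₁ φ₂ : Y → G → X,
      ((∀ y, φ₁ y ∈ extSet η α) ∧ Continuous φ₁ ∧
        (∀ g y, φ₁ (β g y) = fun h => φ₁ y (h * g)) ∧ (∀ y, φ₁ y 1 = τ y)) →
      ((∀ y, φ₂ y ∈ extSet η α) ∧ Continuous φ₂ ∧
        (∀ g y, φ₂ (β g y) = fun h => φ₂ y (h * g)) ∧ (∀ y, φ₂ y 1 = τ y)) →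
      φ₁ = φ₂ := by
  have key : ∀ φ : Y → G → X,
      ((∀ y, φ y ∈ extSet η α) ∧ Continuous φ ∧
        (∀ g y, φ (β g y) = fun h => φ y (h * g)) ∧ (∀ y, φ y 1 = τ y)) →
      ∀ y h, φ y h = τ (β h y) := by
    rintro φ ⟨-, -, heq, hproj⟩ y h
    have := congrFun (heq h y) 1
    simpa [hproj] using this.symm
  constructor
  · refine ⟨fun y h => τ (β h y), ⟨?_, ?_, ?_, ?_⟩, fun _ _ => rfl⟩
    · intro y s h
      rw [hτeq, ← hβmul]
    · exact continuous_pi fun h => hτc.comp (hβcont h)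
    · intro g y
      funext h
      simp only [← hβmul]
    · intro y; simp only [hβ1]
  · intro φ₁ φ₂ h₁ h₂
    funext y h
    rw [key φ₁ h₁, key φ₂ h₂]
end

section
/- If there exists some G-extension of a continuous S-action on X (i.e., a continuous G-action on some Y together with a continuous surjection τ : Y → X satisfying s·τ(y) = τ(η(s)·y)), then the canonical projection π : X_G → X is surjective. -/
/-- If there exists some `G`-extension of a continuous `S`-action on `X`, then the
canonical projection `π : X_G → X` is surjective. -/
theorem stmt_11 (S : Type*) [Monoid S] (G : Type*) [Group G] (η : S →* G)
    (hinj : Function.Injective η)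
    (X : Type*) [TopologicalSpace X]
    (α : S → X → X) (h1 : ∀ x, α 1 x = x)
    (hmul : ∀ s t x, α (s * t) x = α s (α t x))
    (hcont : ∀ s, Continuous (α s))
    (Y : Type*) [TopologicalSpace Y]
    (β : G → Y → Y) (hβ1 : ∀ y, β 1 y = y)
    (hβmul : ∀ g g' y, β (g * g') y = β g (β g' y))
    (hβcont : ∀ g, Continuous (β g))
    (τ : Y → X) (hτc : Continuous τ) (hτsurj : Function.Surjective τ)
    (hτeq : ∀ (s : S) (y : Y), α s (τ y) = τ (β (η s) y)) :
    ∀ x0 : X, ∃ x ∈ extSet η α, x 1 = x0 := by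
  intro x0
  obtain ⟨y, hy⟩ := hτsurj x0
  refine ⟨fun h => τ (β h y), fun s h => ?_, by simp only []; rw [hβ1, hy]⟩
  rw [hτeq, ← hβmul]
end

section
/- Let S be a monoid with injective homomorphism η into a group G = ⟨η(S)⟩, and define the preorder g ≤_S h on G by h·g⁻¹ ∈ η(S). If S is left reversible, then the following are equivalent: (a) every element of G is of the form η(s)η(t)⁻¹ with s,t ∈ S; (b) ≤_S is downward directed (every finite subset of G has a common lower bound); (c) for every finite F ⊆ G there exists g ∈ G with F·g ⊆ η(S). -/
/-- For a left reversible monoid `S` embedded via `η` into a group `G` generated by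
`η(S)`, the following are equivalent: (a) every element of `G` is a right fraction
`η(s)η(t)⁻¹`; (b) the preorder `g ≤_S h ↔ h·g⁻¹ ∈ η(S)` is downward directed;
(c) every finite subset of `G` can be right-translated into `η(S)`. -/
theorem stmt_12 (S : Type*) [Monoid S] (G : Type*) [Group G] (η : S →* G)
    (hinj : Function.Injective η)
    (hgen : Subgroup.closure (Set.range η) = ⊤)
    (hrev : ∀ s t : S, ∃ x y : S, s * x = t * y) :
    ((∀ g : G, ∃ s t : S, g = η s * (η t)⁻¹) ↔
      (∀ F : Finset G, ∃ m : G, ∀ f ∈ F, f * m⁻¹ ∈ Set.range η)) ∧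
    ((∀ F : Finset G, ∃ m : G, ∀ f ∈ F, f * m⁻¹ ∈ Set.range η) ↔
      (∀ F : Finset G, ∃ g : G, ∀ f ∈ F, f * g ∈ Set.range η)) := by
  constructor
  · constructor
    · intro ha F
      classical
      induction F using Finset.induction_on with
      | empty => exact ⟨1, by simp⟩
      | @insert f F' _ ih =>
        obtain ⟨m, hm⟩ := ih
        obtain ⟨s, t, hst⟩ := ha (f * m⁻¹)
        refine ⟨(η t)⁻¹ * m, ?_⟩
        intro f' hf'
        rcases Finset.mem_insert.mp hf' with rfl | h
        · refine ⟨s, ?_⟩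
          have : f' * ((η t)⁻¹ * m)⁻¹ = f' * m⁻¹ * η t := by group
          rw [this, hst]
          group
        · obtain ⟨u, hu⟩ := hm f' h
          refine ⟨u * t, ?_⟩
          have : f' * ((η t)⁻¹ * m)⁻¹ = f' * m⁻¹ * η t := by group
          rw [map_mul, hu, this]
    · classical
      intro hb g
      obtain ⟨m, hm⟩ := hb {g, 1}
      obtain ⟨s, hs⟩ := hm g (by simp)
      obtain ⟨t, ht⟩ := hm 1 (by simp)
      refine ⟨s, t, ?_⟩
      rw [hs, ht]
      group
  · constructor
    · intro h F
      obtain ⟨m, hm⟩ := h F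
      exact ⟨m⁻¹, by simpa using hm⟩
    · intro h F
      obtain ⟨g, hg⟩ := h F
      exact ⟨g⁻¹, by simpa using hg⟩
end

section
/- Let S be a monoid embedded via η into a group G with ⟨η(S)⟩ = G, and define x* ∈ {0,1}^G by x*(g) = 1 iff g ∈ η(S) (i.e., 1_G ≤_S g), and let R be the closure of the G-orbit of x* in {0,1}^G under the shift action. Then the constant configuration 1^G belongs to R if and only if every element of G can be written as η(s)η(t)⁻¹ with s,t ∈ S. -/
open scoped Classical in
private lemma stmt_13_aux {S : Type*} [Monoid S] {G : Type*} [Group G] (η : S →* G)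
    (hfr : ∀ g : G, ∃ s t : S, g = η s * (η t)⁻¹) (F : Finset G) :
    ∃ k : G, ∀ h ∈ F, h * k ∈ Set.range η := by
  classical
  induction F using Finset.induction with
  | empty => exact ⟨1, by simp⟩
  | @insert a F ha ih =>
    obtain ⟨k, hk⟩ := ih
    obtain ⟨s, t, hst⟩ := hfr (a * k)⁻¹
    refine ⟨k * η s, ?_⟩
    intro h hh
    rcases Finset.mem_insert.mp hh with rfl | hh
    · refine ⟨t, ?_⟩
      have : h * k = η t * (η s)⁻¹ := by
        rw [← inv_inv (h * k), hst]; group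
      rw [← mul_assoc, this]; group
    · obtain ⟨u, hu⟩ := hk h hh
      exact ⟨u * s, by rw [map_mul, hu, mul_assoc]⟩

open scoped Classical in
/-- Symbolic characterization of the group of right fractions: with
`x*(g) = 1 ↔ g ∈ η(S)` and `R` the closure of the `G`-orbit of `x*` in `{0,1}^G`
under the shift `(g·x)(h) = x(hg)`, the constant configuration `1` belongs to `R`
iff every element of `G` is a right fraction `η(s)η(t)⁻¹`. -/
theorem stmt_13 (S : Type*) [Monoid S] (G : Type*) [Group G] (η : S →* G)
    (hinj : Function.Injective η)
    (hgen : Subgroup.closure (Set.range η) = ⊤) :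
    ((fun _ : G => true) ∈ closure {x : G → Bool | ∃ g : G,
        x = fun h => if h * g ∈ Set.range η then true else false}) ↔
      ∀ g : G, ∃ s t : S, g = η s * (η t)⁻¹ := by
  constructor
  · intro hcl g
    have hU : IsOpen {y : G → Bool | y 1 = true ∧ y g = true} := by
      have h1 : IsOpen ((fun y : G → Bool => y 1) ⁻¹' {true}) :=
        (continuous_apply 1).isOpen_preimage _ (isOpen_discrete _)
      have h2 : IsOpen ((fun y : G → Bool => y g) ⁻¹' {true}) :=
        (continuous_apply g).isOpen_preimage _ (isOpen_discrete _)
      exact h1.inter h2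
    obtain ⟨y, ⟨hy1, hyg⟩, k, rfl⟩ :=
      mem_closure_iff.mp hcl _ hU ⟨rfl, rfl⟩
    simp only [one_mul] at hy1 hyg
    have hk : k ∈ Set.range η := by
      by_contra h; simp [h] at hy1
    have hgk : g * k ∈ Set.range η := by
      by_contra h; simp [h] at hyg
    obtain ⟨t, rfl⟩ := hk
    obtain ⟨s, hs⟩ := hgk
    exact ⟨s, t, by rw [hs]; group⟩
  · intro hfr
    rw [mem_closure_iff]
    intro U hU hmem
    obtain ⟨I, u, hIu, hsub⟩ := isOpen_pi_iff.mp hU _ hmem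
    obtain ⟨k, hk⟩ := stmt_13_aux η hfr I
    refine ⟨fun h => if h * k ∈ Set.range η then true else false, ?_, ⟨k, rfl⟩⟩
    apply hsub
    intro i hi
    have := hk i hi
    simp only [this, if_true]
    exact (hIu i hi).2
end

section
/- Let S be a bicancellative semigroup admitting a left Følner sequence, embedded via η into a group G with ⟨η(S)⟩ = G. Then G is amenable; concretely, if (F_n) is a left Følner sequence in S, then (η(F_n)) satisfies |g·η(F_n) △ η(F_n)| / |η(F_n)| → 0 for every g ∈ G. -/
open Filter Finset
open scoped symmDiff

/-!
The elements `g ∈ G` at which `η(F_n)` is asymptotically invariant form a subgroup: the defect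
`#(gA ∆ A) / #A` is invariant under `g ↦ g⁻¹` and subadditive, because left translation preserves
the size of symmetric differences and the symmetric difference satisfies the triangle inequality.
On `η(S)` the defect is that of `F_n` itself, since `η` is an injective homomorphism, so this
subgroup contains the generating set `η(S)` and is therefore all of `G`.
-/

theorem Finset.card_symmDiff_le_add {α : Type*} [DecidableEq α] (A B C : Finset α) :
    #(A ∆ C) ≤ #(A ∆ B) + #(B ∆ C) :=
  calc #(A ∆ C) ≤ #(A ∆ B ∪ B ∆ C) := card_le_card (by simpa using symmDiff_triangle A B C)
    _ ≤ #(A ∆ B) + #(B ∆ C) := card_union_le _ _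

section Group

variable {G : Type*} [Group G] [DecidableEq G]

theorem Finset.card_image_mul_left_symmDiff (g : G) (A B : Finset G) :
    #(A.image (g * ·) ∆ B.image (g * ·)) = #(A ∆ B) := by
  rw [← image_symmDiff _ _ (mul_right_injective g), card_image_of_injective _ (mul_right_injective g)]

noncomputable def folnerDefect (A : Finset G) (g : G) : ℝ :=
  (#(A.image (g * ·) ∆ A) : ℝ) / #A

theorem folnerDefect_nonneg (A : Finset G) (g : G) : 0 ≤ folnerDefect A g := by
  unfold folnerDefect
  positivity

theorem folnerDefect_one (A : Finset G) : folnerDefect A 1 = 0 := by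
  simp [folnerDefect]

theorem folnerDefect_inv (A : Finset G) (g : G) : folnerDefect A g⁻¹ = folnerDefect A g := by
  have htranslate : (A.image (g⁻¹ * ·)).image (g * ·) = A := by
    rw [image_image]
    simp [Function.comp_def]
  unfold folnerDefect
  rw [← card_image_mul_left_symmDiff g, htranslate, symmDiff_comm]

theorem folnerDefect_mul_le (A : Finset G) (g h : G) :
    folnerDefect A (g * h) ≤ folnerDefect A g + folnerDefect A h := by
  have hcomp : A.image ((g * h) * ·) = (A.image (h * ·)).image (g * ·) := by
    rw [image_image]
    simp [Function.comp_def, mul_assoc]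
  have htriangle : #(A.image ((g * h) * ·) ∆ A) ≤ #(A.image (g * ·) ∆ A) + #(A.image (h * ·) ∆ A) :=
    calc #(A.image ((g * h) * ·) ∆ A)
        ≤ #(A.image ((g * h) * ·) ∆ A.image (g * ·)) + #(A.image (g * ·) ∆ A) :=
          card_symmDiff_le_add _ _ _
      _ = #(A.image (g * ·) ∆ A) + #(A.image (h * ·) ∆ A) := by
          rw [hcomp, card_image_mul_left_symmDiff, add_comm]
  unfold folnerDefect
  rw [← add_div]
  gcongr
  exact_mod_cast htriangle

noncomputable def folnerSubgroup {ι : Type*} (l : Filter ι) (A : ι → Finset G) : Subgroup G where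
  carrier := {g | Tendsto (fun i => folnerDefect (A i) g) l (nhds 0)}
  one_mem' := by simpa [folnerDefect_one] using tendsto_const_nhds
  mul_mem' {g h} hg hh := by
    refine squeeze_zero (fun i => folnerDefect_nonneg _ _) (fun i => folnerDefect_mul_le _ g h) ?_
    simpa using hg.add hh
  inv_mem' {g} hg := by simpa [folnerDefect_inv] using hg

end Group

theorem folnerDefect_image_map {S G : Type*} [Semigroup S] [DecidableEq S] [Group G]
    [DecidableEq G] (η : S →ₙ* G) (hη : Function.Injective η) (F : Finset S) (s : S) :
    folnerDefect (F.image η) (η s) = (#(F.image (s * ·) ∆ F) : ℝ) / #F := by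
  have himage : (F.image η).image (η s * ·) = (F.image (s * ·)).image η := by
    simp only [image_image, Function.comp_def, map_mul]
  rw [folnerDefect, himage, ← image_symmDiff _ _ hη, card_image_of_injective _ hη,
    card_image_of_injective _ hη]

theorem stmt_17_general (S : Type*) [Semigroup S] [DecidableEq S]
    (G : Type*) [Group G] [DecidableEq G] (η : S → G)
    (hhom : ∀ a b : S, η (a * b) = η a * η b)
    (hinj : Function.Injective η)
    (hgen : Subgroup.closure (Set.range η) = ⊤)
    (F : ℕ → Finset S)
    (hfol : ∀ s : S, Tendsto
      (fun n => ((symmDiff ((F n).image (fun x => s * x)) (F n)).card : ℝ) / (F n).card)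
      atTop (nhds 0)) :
    ∀ g : G, Tendsto
      (fun n => ((symmDiff (((F n).image η).image (fun x => g * x)) ((F n).image η)).card : ℝ) /
        ((F n).image η).card)
      atTop (nhds 0) := by
  let ηHom : S →ₙ* G := ⟨η, hhom⟩
  have hrange : Set.range η ⊆ folnerSubgroup atTop (fun n => (F n).image η) := by
    rintro _ ⟨s, rfl⟩
    exact (hfol s).congr fun n => (folnerDefect_image_map ηHom hinj (F n) s).symm
  intro g
  exact (Subgroup.closure_le _).2 hrange (hgen ▸ Subgroup.mem_top g)

/-- If a bicancellative semigroup `S` with a left Følner sequence embeds via `η` into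
a group `G` generated by `η(S)`, then `G` is amenable: the sets `η(F_n)` form a left
Følner sequence for `G`. -/
theorem stmt_17 (S : Type*) [Semigroup S] [DecidableEq S]
    (G : Type*) [Group G] [DecidableEq G] (η : S → G)
    (hhom : ∀ a b : S, η (a * b) = η a * η b)
    (hinj : Function.Injective η)
    (hgen : Subgroup.closure (Set.range η) = ⊤)
    (hlc : ∀ a b c : S, a * b = a * c → b = c)
    (hrc : ∀ a b c : S, b * a = c * a → b = c)
    (F : ℕ → Finset S) (hne : ∀ n, (F n).Nonempty)
    (hfol : ∀ s : S, Tendsto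
      (fun n => ((symmDiff ((F n).image (fun x => s * x)) (F n)).card : ℝ) / (F n).card)
      atTop (nhds 0)) :
    ∀ g : G, Tendsto
      (fun n => ((symmDiff (((F n).image η).image (fun x => g * x)) ((F n).image η)).card : ℝ) /
        ((F n).image η).card)
      atTop (nhds 0) :=
  stmt_17_general S G η hhom hinj hgen F hfol
end

section
/- Let S be a left reversible bicancellative monoid with group of right fractions (Γ, γ), acting continuously and surjectively on a topological space X with surjective projection π : X_Γ → X. If the S-action on X is topologically transitive, then the shift Γ-action on X_Γ is topologically transitive. -/
/-- Finite common right multiples from left reversibility. -/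
private lemma crm_aux {S : Type*} [Monoid S] {ι : Type*}
    (hrev : ∀ s t : S, ∃ x y : S, s * x = t * y)
    (I : Finset ι) (b : ι → S) : ∃ c : S, ∀ i ∈ I, ∃ d, b i * d = c := by
  classical
  induction I using Finset.induction with
  | empty => exact ⟨1, by simp⟩
  | @insert a I' hni ih =>
    obtain ⟨c, hc⟩ := ih
    obtain ⟨x, y, hxy⟩ := hrev (b a) c
    refine ⟨c * y, fun i hi => ?_⟩
    rcases Finset.mem_insert.1 hi with rfl | hi
    · exact ⟨x, hxy⟩
    · obtain ⟨d, hd⟩ := hc i hi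
      exact ⟨d * y, by rw [← mul_assoc, hd]⟩

/-- If a left reversible bicancellative monoid `S` with group of right fractions
`(Γ, γ)` acts continuously, surjectively, and topologically transitively on `X`, and
the projection `π : X_Γ → X` is surjective, then the shift `Γ`-action on `X_Γ` is
topologically transitive (openness in `X_Γ` being relative to the product topology
of `X^Γ`). -/
theorem stmt_18 (S : Type*) [Monoid S] (Γ : Type*) [Group Γ] (γ : S →* Γ)
    (hinj : Function.Injective γ)
    (hrev : ∀ s t : S, ∃ x y : S, s * x = t * y)
    (hlc : ∀ a b c : S, a * b = a * c → b = c)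
    (hrc : ∀ a b c : S, b * a = c * a → b = c)
    (hfrac : ∀ g : Γ, ∃ s t : S, g = γ s * (γ t)⁻¹)
    (X : Type*) [TopologicalSpace X]
    (α : S → X → X) (h1 : ∀ x, α 1 x = x)
    (hmul : ∀ s t x, α (s * t) x = α s (α t x))
    (hcont : ∀ s, Continuous (α s))
    (hαsurj : ∀ s, Function.Surjective (α s))
    (hπsurj : ∀ x0 : X,
      ∃ x ∈ {x : Γ → X | ∀ (s : S) (h : Γ), α s (x h) = x (γ s * h)}, x 1 = x0)
    (htrans : ∀ U V : Set X, IsOpen U → IsOpen V → U.Nonempty → V.Nonempty →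
      ∃ s : S, (α s '' U ∩ V).Nonempty) :
    ∀ U V : Set (Γ → X),
      U ⊆ {x : Γ → X | ∀ (s : S) (h : Γ), α s (x h) = x (γ s * h)} →
      V ⊆ {x : Γ → X | ∀ (s : S) (h : Γ), α s (x h) = x (γ s * h)} →
      (∃ U' : Set (Γ → X), IsOpen U' ∧
        U = U' ∩ {x : Γ → X | ∀ (s : S) (h : Γ), α s (x h) = x (γ s * h)}) →
      (∃ V' : Set (Γ → X), IsOpen V' ∧
        V = V' ∩ {x : Γ → X | ∀ (s : S) (h : Γ), α s (x h) = x (γ s * h)}) →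
      U.Nonempty → V.Nonempty →
      ∃ (g : Γ) (x : Γ → X), x ∈ U ∧ (fun h : Γ => x (h * g)) ∈ V := by
  classical
  set XΓ : Set (Γ → X) := {x : Γ → X | ∀ (s : S) (h : Γ), α s (x h) = x (γ s * h)}
    with hXΓ
  rintro U V hUX hVX ⟨U', hU'open, rfl⟩ ⟨V', hV'open, rfl⟩ ⟨u, huU', huXΓ⟩ ⟨v, hvV', hvXΓ⟩
  -- extract basic cylinders
  obtain ⟨IU, WU, hWU, hWUsub⟩ := (isOpen_pi_iff.1 hU'open) u huU'
  obtain ⟨IV, WV, hWV, hWVsub⟩ := (isOpen_pi_iff.1 hV'open) v hvV'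
  choose fa fb hfab using hfrac
  -- common denominators
  obtain ⟨cU, hcU⟩ := crm_aux hrev IU (fun f => fb f)
  obtain ⟨cV, hcV⟩ := crm_aux hrev IV (fun f => fb f)
  -- selection of numerators: f = γ (sU f) * (γ cU)⁻¹ for f ∈ IU
  have hselU : ∀ f ∈ IU, ∃ s : S, f = γ s * (γ cU)⁻¹ := by
    intro f hf
    obtain ⟨d, hd⟩ := hcU f hf
    refine ⟨fa f * d, ?_⟩
    have hc : γ cU = γ (fb f) * γ d := by rw [← map_mul, hd]
    rw [map_mul, hc, mul_inv_rev]
    conv_lhs => rw [hfab f]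
    group
  have hselV : ∀ f ∈ IV, ∃ s : S, f = γ s * (γ cV)⁻¹ := by
    intro f hf
    obtain ⟨d, hd⟩ := hcV f hf
    refine ⟨fa f * d, ?_⟩
    have hc : γ cV = γ (fb f) * γ d := by rw [← map_mul, hd]
    rw [map_mul, hc, mul_inv_rev]
    conv_lhs => rw [hfab f]
    group
  choose! sU hsU using hselU
  choose! sV hsV using hselV
  set mU : Γ := (γ cU)⁻¹ with hmU
  set mV : Γ := (γ cV)⁻¹ with hmV
  -- reduced open sets in X
  set WU' : Set X := ⋂ f ∈ IU, α (sU f) ⁻¹' WU f with hWU'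
  set WV' : Set X := ⋂ f ∈ IV, α (sV f) ⁻¹' WV f with hWV'
  have hWU'open : IsOpen WU' :=
    isOpen_biInter_finset fun f hf => (hWU f hf).1.preimage (hcont _)
  have hWV'open : IsOpen WV' :=
    isOpen_biInter_finset fun f hf => (hWV f hf).1.preimage (hcont _)
  -- membership in reduced sets suffices for membership in cylinders
  have keyU : ∀ x : Γ → X, x ∈ XΓ → x mU ∈ WU' → x ∈ (IU : Set Γ).pi WU := by
    intro x hx hxm
    intro f hf
    have hfI : f ∈ IU := by simpa using hf
    have h1' : α (sU f) (x mU) = x f := by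
      rw [hx (sU f) mU, ← hsU f hfI]
    have := Set.mem_iInter₂.1 hxm f hfI
    simpa [h1'] using this
  have keyV : ∀ x : Γ → X, x ∈ XΓ → x mV ∈ WV' → x ∈ (IV : Set Γ).pi WV := by
    intro x hx hxm
    intro f hf
    have hfI : f ∈ IV := by simpa using hf
    have h1' : α (sV f) (x mV) = x f := by
      rw [hx (sV f) mV, ← hsV f hfI]
    have := Set.mem_iInter₂.1 hxm f hfI
    simpa [h1'] using this
  -- nonemptiness of the reduced sets
  have huW : u mU ∈ WU' := by
    refine Set.mem_iInter₂.2 fun f hf => ?_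
    have : α (sU f) (u mU) = u f := by rw [huXΓ (sU f) mU, ← hsU f hf]
    simpa [Set.mem_preimage, this] using (hWU f hf).2
  have hvW : v mV ∈ WV' := by
    refine Set.mem_iInter₂.2 fun f hf => ?_
    have : α (sV f) (v mV) = v f := by rw [hvXΓ (sV f) mV, ← hsV f hf]
    simpa [Set.mem_preimage, this] using (hWV f hf).2
  -- apply topological transitivity on X
  obtain ⟨s, p, ⟨w, hwWU', hws⟩, hpWV'⟩ :=
    htrans WU' WV' hWU'open hWV'open ⟨_, huW⟩ ⟨_, hvW⟩
  -- build the witness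
  obtain ⟨y, hyXΓ, hy1⟩ := hπsurj w
  set g : Γ := mV⁻¹ * γ s * mU with hg
  set x : Γ → X := fun h => y (h * mU⁻¹) with hxdef
  have hxXΓ : x ∈ XΓ := by
    intro s' h
    simp only [hxdef]
    rw [hyXΓ s' (h * mU⁻¹), mul_assoc]
  have hxmU : x mU = w := by simp [hxdef, hy1]
  have hzXΓ : (fun h : Γ => x (h * g)) ∈ XΓ := by
    intro s' h
    simp only []
    rw [hxXΓ s' (h * g), mul_assoc]
  refine ⟨g, x, ⟨hWUsub (keyU x hxXΓ (by rw [hxmU]; exact hwWU')), hxXΓ⟩, ?_⟩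
  refine ⟨hWVsub (keyV _ hzXΓ ?_), hzXΓ⟩
  have hcoord : x (mV * g) = α s w := by
    have : mV * g = γ s * mU := by rw [hg]; group
    rw [this, ← hxXΓ s mU, hxmU]
  simpa [hcoord, hws] using hpWV'
end

section
/- Under the same hypotheses (S left reversible bicancellative monoid with group of right fractions (Γ, γ), surjective continuous S-action on X, π : X_Γ → X surjective): if the S-action on X is minimal (every S-orbit is dense), then the shift Γ-action on X_Γ is minimal; more precisely, for every x ∈ X with dense S-orbit and every x̄ ∈ π⁻¹(x), the Γ-orbit of x̄ is dense in X_Γ. -/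
private lemma cm_aux {S : Type*} [Monoid S] (hrev : ∀ s t : S, ∃ x y : S, s * x = t * y)
    {ι : Type*} (F : Finset ι) (f : ι → S) : ∃ T : S, ∀ h ∈ F, ∃ r, T = f h * r := by
  classical
  induction F using Finset.induction_on with
  | empty => exact ⟨1, fun h hh => absurd hh (Finset.notMem_empty h)⟩
  | @insert a F ha ih =>
    obtain ⟨T, hT⟩ := ih
    obtain ⟨u, v, huv⟩ := hrev (f a) T
    refine ⟨f a * u, fun h hh => ?_⟩
    rcases Finset.mem_insert.mp hh with rfl | hh
    · exact ⟨u, rfl⟩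
    · obtain ⟨r, hr⟩ := hT h hh
      exact ⟨r * v, by rw [huv, hr, mul_assoc]⟩

/-- If a left reversible bicancellative monoid `S` with group of right fractions
`(Γ, γ)` acts continuously, surjectively, and minimally on `X`, and the projection
`π : X_Γ → X` is surjective, then the shift `Γ`-action on `X_Γ` is minimal: for every
`x ∈ X` with dense `S`-orbit and every `x̄ ∈ π⁻¹(x)`, the `Γ`-orbit of `x̄` meets
every nonempty relatively open subset of `X_Γ`. -/
theorem stmt_19 (S : Type*) [Monoid S] (Γ : Type*) [Group Γ] (γ : S →* Γ)
    (hinj : Function.Injective γ)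
    (hrev : ∀ s t : S, ∃ x y : S, s * x = t * y)
    (hlc : ∀ a b c : S, a * b = a * c → b = c)
    (hrc : ∀ a b c : S, b * a = c * a → b = c)
    (hfrac : ∀ g : Γ, ∃ s t : S, g = γ s * (γ t)⁻¹)
    (X : Type*) [TopologicalSpace X]
    (α : S → X → X) (h1 : ∀ x, α 1 x = x)
    (hmul : ∀ s t x, α (s * t) x = α s (α t x))
    (hcont : ∀ s, Continuous (α s))
    (hαsurj : ∀ s, Function.Surjective (α s))
    (hπsurj : ∀ x0 : X,
      ∃ x ∈ {x : Γ → X | ∀ (s : S) (h : Γ), α s (x h) = x (γ s * h)}, x 1 = x0)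
    (hmin : ∀ x : X, Dense (Set.range fun s : S => α s x)) :
    ∀ x : X, Dense (Set.range fun s : S => α s x) →
      ∀ xbar ∈ {x : Γ → X | ∀ (s : S) (h : Γ), α s (x h) = x (γ s * h)},
        xbar 1 = x →
        ∀ U : Set (Γ → X),
          (∃ U' : Set (Γ → X), IsOpen U' ∧
            U = U' ∩ {x : Γ → X | ∀ (s : S) (h : Γ), α s (x h) = x (γ s * h)}) →
          U.Nonempty →
          ∃ g : Γ, (fun h : Γ => xbar (h * g)) ∈ U := by
  intro x hx xbar hxbar hx1 U hU hUne
  obtain ⟨U', hU'open, rfl⟩ := hU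
  obtain ⟨ybar, hybarU', hybarX⟩ := hUne
  obtain ⟨F, V, hV, hpi⟩ := isOpen_pi_iff.mp hU'open ybar hybarU'
  -- write each h ∈ F as a right fraction
  choose s t hst using hfrac
  -- common right multiple T of the denominators
  obtain ⟨T, hT⟩ := cm_aux hrev F t
  have hT' : ∀ h : Γ, ∃ r : S, h ∈ F → T = t h * r := by
    intro h
    by_cases hh : h ∈ F
    · obtain ⟨r, hr⟩ := hT h hh; exact ⟨r, fun _ => hr⟩
    · exact ⟨1, fun hh' => absurd hh' hh⟩
  choose r hr using hT'
  set u : Γ → S := fun h => s h * r h with hu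
  have hγu : ∀ h ∈ F, γ (u h) = h * γ T := by
    intro h hh
    have hTr : (γ T : Γ) = γ (t h) * γ (r h) := by rw [hr h hh, map_mul]
    calc γ (u h) = γ (s h) * γ (r h) := map_mul γ _ _
      _ = γ (s h) * ((γ (t h))⁻¹ * (γ (t h) * γ (r h))) := by rw [inv_mul_cancel_left]
      _ = h * γ T := by rw [hTr, ← mul_assoc, ← hst h]
  -- the open set W
  set W : Set X := ⋂ h ∈ F, α (u h) ⁻¹' V h with hW
  have hWopen : IsOpen W := by
    apply isOpen_biInter_finset
    intro h hh
    exact (hV h hh).1.preimage (hcont (u h))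
  have hWne : ybar ((γ T)⁻¹) ∈ W := by
    rw [hW]
    simp only [Set.mem_iInter, Set.mem_preimage]
    intro h hh
    have := hybarX (u h) ((γ T)⁻¹)
    rw [this, hγu h hh, mul_inv_cancel_right]
    exact (hV h hh).2
  obtain ⟨z, hzmem, hzW⟩ := hx.exists_mem_open hWopen ⟨_, hWne⟩
  obtain ⟨sw, rfl⟩ := hzmem
  refine ⟨γ T * γ sw, ?_, ?_⟩
  · apply hpi
    intro h hh
    have key : xbar (h * (γ T * γ sw)) = α (u h) (α sw x) := by
      rw [← mul_assoc, ← hγu h hh, ← map_mul, ← hmul]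
      have := hxbar (u h * sw) 1
      rw [mul_one] at this
      rw [← this, hx1]
    show xbar (h * (γ T * γ sw)) ∈ V h
    rw [key]
    have := hzW
    rw [hW] at this
    simp only [Set.mem_iInter, Set.mem_preimage] at this
    exact this h hh
  · intro s' h'
    have := hxbar s' (h' * (γ T * γ sw))
    simpa [mul_assoc] using this
end
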